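/- In the symmetric Bertrand duopoly with uniform costs, all-or-nothing demand, and two-piece piecewise linear strategies parametrized by slopes (x₁, x₂), the symmetric game gradient is v₁(x) = -7/48 - (3x₂)/(48x₁) + 5/(48x₁) and v₂(x) = -1/3 - x₂/(8x₁) + 3/(16x₁) + 1/(24x₂), for x₁, x₂ > 0. -/

import Mathlib

/-- The price function induced by two-piece piecewise-linear slopes `x = (x₁,x₂)`:
`p₁(x,c) = x₁·c + 1 - (x₁+x₂)/2` on `[0,1/2]` and `p₂(x,c) = x₂(c-1/2) + 1 - x₂/2`
on `(1/2,1]`. -/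
noncomputable def price (x : ℝ × ℝ) (c : ℝ) : ℝ :=
  if c ≤ 1 / 2 then x.1 * c + 1 - (x.1 + x.2) / 2
  else x.2 * (c - 1 / 2) + 1 - x.2 / 2

/-- Expected utility of a player with slopes `x` against an opponent with slopes `x'`
under all-or-nothing demand and uniform costs: the winning probability is the mass of
opponent costs with a strictly higher price. -/
noncomputable def expUtil (x x' : ℝ × ℝ) : ℝ :=
  ∫ c in (0 : ℝ)..1, (price x c - c) *
    ∫ z in (0 : ℝ)..1, (if price x c < price x' z then (1 : ℝ) else 0)

/-!
The opponent's winning probability `winProb (a, b) p` is a clamped piecewise-affine function of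
the price `p`, hence Lipschitz; at the price `price (a, b) c` with `c ∉ {0, 1/2, 1}` it is locally
affine, with value `1 - c` and slope `-1/a` or `-1/b`. Prices are affine in the slopes,
`price (x + t • d) c = price x c + t * (price d c - 1)`, so the utility along a line of slopes can
be differentiated under the integral sign (dominated convergence with a Lipschitz bound). At the
symmetric point the derivative is the integral of a piecewise quadratic polynomial in `c`, and it
evaluates to `d.1 * v₁ + d.2 * v₂`.
-/

open MeasureTheory Set Filter
open scoped NNReal Interval

theorem hasDerivAt_integral_mul_comp_add_mul {P g W W' : ℝ → ℝ} {K : ℝ≥0} {B l u : ℝ}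
    (hP : Continuous P) (hg : Continuous g) (hW : LipschitzWith K W) (hWB : ∀ p, |W p| ≤ B)
    (hW' : Measurable W') (hderiv : ∀ᵐ c, c ∈ Ι l u → HasDerivAt W (W' c) (P c)) :
    HasDerivAt (fun t => ∫ c in l..u, (P c + t * g c - c) * W (P c + t * g c))
      (∫ c in l..u, g c * (W (P c) + (P c - c) * W' c)) 0 := by
  have hWc := hW.continuous
  have hB : 0 ≤ B := (abs_nonneg _).trans (hWB 0)
  let bound c := (|P c - c| + |g c|) * K * |g c| + B * |g c|
  refine (intervalIntegral.hasDerivAt_integral_of_dominated_loc_of_lip (bound := bound)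
    (Metric.ball_mem_nhds 0 one_pos) ?_ ?_ ?_ ?_ ?_ ?_).2
  · exact Eventually.of_forall fun t => (by fun_prop : Continuous _).aestronglyMeasurable
  · exact (by fun_prop : Continuous _).intervalIntegrable _ _
  · exact (by fun_prop : Measurable fun c => g c * (W (P c) + (P c - c) * W' c))
      |>.aestronglyMeasurable
  · refine ae_of_all _ fun c _ => LipschitzOnWith.of_dist_le_mul fun t ht t' _ => ?_
    rw [Metric.mem_ball, Real.dist_0_eq_abs] at ht
    have hWlip := hW.dist_le_mul (P c + t * g c) (P c + t' * g c)
    have hbound : 0 ≤ bound c := by positivity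
    rw [Real.dist_eq, Real.dist_eq] at hWlip ⊢
    rw [Real.coe_nnabs, abs_of_nonneg hbound]
    calc |(P c + t * g c - c) * W (P c + t * g c) - (P c + t' * g c - c) * W (P c + t' * g c)|
        = |(P c - c + t * g c) * (W (P c + t * g c) - W (P c + t' * g c))
            + (t - t') * g c * W (P c + t' * g c)| := by ring_nf
      _ ≤ (|P c - c| + |g c|) * (K * (|t - t'| * |g c|)) + |t - t'| * |g c| * B := by
        refine (abs_add_le _ _).trans (add_le_add ?_ ?_) <;> rw [abs_mul]
        · refine mul_le_mul ((abs_add_le _ _).trans ?_) ?_ (abs_nonneg _) (by positivity)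
          · rw [abs_mul]; nlinarith [abs_nonneg (g c)]
          · exact hWlip.trans_eq (by rw [← abs_mul]; ring_nf)
        · rw [abs_mul]; gcongr; exact hWB _
      _ = bound c * |t - t'| := by ring
  · exact (by fun_prop : Continuous bound).intervalIntegrable _ _
  · filter_upwards [hderiv] with c hc hcI
    have hlin : HasDerivAt (fun t => P c + t * g c) (g c) 0 := by
      simpa using ((hasDerivAt_id (0 : ℝ)).mul_const (g c)).const_add (P c)
    exact ((hlin.sub_const c).mul ((hc hcI).comp_of_eq 0 hlin (by simp))).congr_deriv
      (by simp only [Function.comp_apply, zero_mul, add_zero]; ring)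

lemma monotone_ite_lt (s : ℝ) : Monotone fun z : ℝ => if s < z then (1 : ℝ) else 0 :=
  fun z w hzw => by dsimp only; split_ifs <;> linarith

lemma integral_ite_lt {l u : ℝ} (h : l ≤ u) (s : ℝ) :
    ∫ z in l..u, (if s < z then (1 : ℝ) else 0) = u - max l (min u s) := by
  have hind : (fun z : ℝ => if s < z then (1 : ℝ) else 0) = (Ioi s).indicator 1 := by
    ext z; simp [indicator_apply]
  rw [intervalIntegral.integral_of_le h, hind, integral_indicator_one measurableSet_Ioi,
    measureReal_restrict_apply measurableSet_Ioi, inter_comm, Ioc_inter_Ioi, Real.volume_real_Ioc]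
  simp only [max_def, min_def]
  split_ifs <;> linarith

lemma integral_linear_mul_linear (p q r s l u : ℝ) :
    ∫ c in l..u, (p + q * c) * (r + s * c) =
      p * r * (u - l) + (p * s + q * r) * (u ^ 2 - l ^ 2) / 2 + q * s * (u ^ 3 - l ^ 3) / 3 := by
  have hderiv : ∀ c : ℝ,
      HasDerivAt (fun c => p * r * c + (p * s + q * r) * c ^ 2 / 2 + q * s * c ^ 3 / 3)
        ((p + q * c) * (r + s * c)) c := fun c =>
    ((((hasDerivAt_id c).const_mul (p * r)).add
      (((hasDerivAt_pow 2 c).const_mul (p * s + q * r)).div_const 2)).add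
      (((hasDerivAt_pow 3 c).const_mul (q * s)).div_const 3)).congr_deriv
      (by simp only [mul_one, Nat.cast_ofNat, Nat.add_one_sub_one, pow_one]; ring)
  rw [intervalIntegral.integral_eq_sub_of_hasDerivAt (fun c _ => hderiv c)
    ((by fun_prop : Continuous fun c : ℝ => (p + q * c) * (r + s * c)).intervalIntegrable _ _)]
  ring

lemma continuous_price (x : ℝ × ℝ) : Continuous (price x) := by
  refine Continuous.if_le (by fun_prop) (by fun_prop) continuous_id continuous_const ?_
  intro c hc
  rw [hc]
  ring

lemma price_add_smul (x d : ℝ × ℝ) (t c : ℝ) :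
    price (x + t • d) c = price x c + t * (price d c - 1) := by
  unfold price
  split_ifs <;> simp only [Prod.fst_add, Prod.snd_add, Prod.smul_fst, Prod.smul_snd, smul_eq_mul]
    <;> ring

section Symmetric

variable {a b : ℝ}

-- `expUtil x x'` unfolds to `∫ c in 0..1, (price x c - c) * winProb x' (price x c)`.
noncomputable def winProb (x' : ℝ × ℝ) (p : ℝ) : ℝ :=
  ∫ z in (0 : ℝ)..1, if p < price x' z then (1 : ℝ) else 0

lemma winProb_eq (ha : 0 < a) (hb : 0 < b) (p : ℝ) :
    winProb (a, b) p = (1 / 2 - max 0 (min (1 / 2) ((p - (1 - (a + b) / 2)) / a)))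
      + (1 - max (1 / 2) (min 1 ((p - (1 - b)) / b))) := by
  have hlow : EqOn (fun z => if p < price (a, b) z then (1 : ℝ) else 0)
      (fun z => if (p - (1 - (a + b) / 2)) / a < z then 1 else 0) (Ι 0 (1 / 2)) := by
    intro z hz
    rw [uIoc_of_le (by norm_num)] at hz
    simp only [price, if_pos hz.2, div_lt_iff₀ ha]
    split_ifs <;> linarith
  have hhigh : EqOn (fun z => if p < price (a, b) z then (1 : ℝ) else 0)
      (fun z => if (p - (1 - b)) / b < z then 1 else 0) (Ι (1 / 2) 1) := by
    intro z hz
    rw [uIoc_of_le (by norm_num)] at hz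
    simp only [price, if_neg (not_le.mpr hz.1), div_lt_iff₀ hb]
    split_ifs <;> linarith
  rw [winProb, ← intervalIntegral.integral_add_adjacent_intervals (b := 1 / 2)
      ((monotone_ite_lt _).intervalIntegrable.congr hlow.symm)
      ((monotone_ite_lt _).intervalIntegrable.congr hhigh.symm),
    intervalIntegral.integral_congr_ae (ae_of_all _ hlow),
    intervalIntegral.integral_congr_ae (ae_of_all _ hhigh),
    integral_ite_lt (by norm_num), integral_ite_lt (by norm_num)]

lemma lipschitzWith_winProb (ha : 0 < a) (hb : 0 < b) :
    LipschitzWith (a⁻¹ + b⁻¹).toNNReal (winProb (a, b)) := by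
  refine LipschitzWith.of_dist_le_mul fun p q => ?_
  rw [Real.coe_toNNReal _ (by positivity), Real.dist_eq, Real.dist_eq, winProb_eq ha hb,
    winProb_eq ha hb]
  have hlow : |max 0 (min (1 / 2) ((p - (1 - (a + b) / 2)) / a))
      - max 0 (min (1 / 2) ((q - (1 - (a + b) / 2)) / a))|
      ≤ |(p - (1 - (a + b) / 2)) / a - (q - (1 - (a + b) / 2)) / a| :=
    abs_projIcc_sub_projIcc (by norm_num)
  have hhigh : |max (1 / 2) (min 1 ((p - (1 - b)) / b)) - max (1 / 2) (min 1 ((q - (1 - b)) / b))|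
      ≤ |(p - (1 - b)) / b - (q - (1 - b)) / b| :=
    abs_projIcc_sub_projIcc (by norm_num)
  rw [← sub_div, abs_div, abs_of_pos ha, sub_sub_sub_cancel_right] at hlow
  rw [← sub_div, abs_div, abs_of_pos hb, sub_sub_sub_cancel_right] at hhigh
  calc _ ≤ |p - q| / a + |p - q| / b := by
        rw [abs_le] at hlow hhigh ⊢; constructor <;> linarith
    _ = (a⁻¹ + b⁻¹) * |p - q| := by ring

lemma abs_winProb_le (x' : ℝ × ℝ) (p : ℝ) : |winProb x' p| ≤ 1 := by
  have := intervalIntegral.norm_integral_le_of_norm_le_const (a := 0) (b := 1) (C := 1)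
    (f := fun z => if p < price x' z then (1 : ℝ) else 0) fun z _ => by split_ifs <;> norm_num
  simpa [winProb] using this

lemma winProb_of_mem_Icc_low (ha : 0 < a) (hb : 0 < b) {p : ℝ}
    (hp : p ∈ Icc (1 - (a + b) / 2) (1 - b / 2)) :
    winProb (a, b) p = 1 - (p - (1 - (a + b) / 2)) / a := by
  obtain ⟨hlo, hhi⟩ := hp
  rw [winProb_eq ha hb, min_eq_right ((div_le_iff₀ ha).mpr (by linarith)),
    max_eq_right (div_nonneg (by linarith) ha.le),
    max_eq_left ((min_le_right _ _).trans ((div_le_iff₀ hb).mpr (by linarith)))]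
  ring

lemma winProb_of_mem_Icc_high (ha : 0 < a) (hb : 0 < b) {p : ℝ} (hp : p ∈ Icc (1 - b / 2) 1) :
    winProb (a, b) p = (1 - p) / b := by
  obtain ⟨hlo, hhi⟩ := hp
  rw [winProb_eq ha hb, min_eq_left ((le_div_iff₀ ha).mpr (by linarith)),
    min_eq_right ((div_le_iff₀ hb).mpr (by linarith)),
    max_eq_right ((le_div_iff₀ hb).mpr (by linarith)), max_eq_right (by norm_num)]
  field_simp
  ring

lemma winProb_price_self (ha : 0 < a) (hb : 0 < b) {c : ℝ} (hc : c ∈ Icc 0 1) :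
    winProb (a, b) (price (a, b) c) = 1 - c := by
  obtain ⟨hc0, hc1⟩ := hc
  by_cases hch : c ≤ 1 / 2
  · rw [price, if_pos hch, winProb_of_mem_Icc_low ha hb ⟨by nlinarith, by nlinarith⟩]
    field_simp
    ring
  · rw [price, if_neg hch, winProb_of_mem_Icc_high ha hb ⟨by nlinarith, by nlinarith⟩]
    field_simp
    ring

lemma hasDerivAt_winProb_price (ha : 0 < a) (hb : 0 < b) {c : ℝ} (hc : c ∈ Ioo 0 1)
    (hc' : c ≠ 1 / 2) :
    HasDerivAt (winProb (a, b)) (if c ≤ 1 / 2 then -a⁻¹ else -b⁻¹) (price (a, b) c) := by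
  obtain ⟨hc0, hc1⟩ := hc
  by_cases hch : c ≤ 1 / 2
  · have hlt : c < 1 / 2 := lt_of_le_of_ne hch hc'
    rw [if_pos hch]
    have hline :
        HasDerivAt (fun p => 1 - (p - (1 - (a + b) / 2)) / a) (-a⁻¹) (price (a, b) c) := by
      simpa using (((hasDerivAt_id _).sub_const _).div_const a).const_sub 1
    refine hline.congr_of_eventuallyEq (eventuallyEq_of_mem (Ioo_mem_nhds ?_ ?_)
      fun p hp => winProb_of_mem_Icc_low ha hb (Ioo_subset_Icc_self hp))
    all_goals rw [price, if_pos hch]; nlinarith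
  · rw [if_neg hch]
    have hline : HasDerivAt (fun p => (1 - p) / b) (-b⁻¹) (price (a, b) c) := by
      simpa [neg_div] using ((hasDerivAt_id _).const_sub 1).div_const b
    refine hline.congr_of_eventuallyEq (eventuallyEq_of_mem (Ioo_mem_nhds ?_ ?_)
      fun p hp => winProb_of_mem_Icc_high ha hb (Ioo_subset_Icc_self hp))
    all_goals rw [price, if_neg hch]; nlinarith

-- The game gradient `(v₁, v₂)` of the paper.
noncomputable def gameGradient (x : ℝ × ℝ) : ℝ × ℝ :=
  (-7 / 48 - 3 * x.2 / (48 * x.1) + 5 / (48 * x.1),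
    -1 / 3 - x.2 / (8 * x.1) + 3 / (16 * x.1) + 1 / (24 * x.2))

lemma integral_marginalProfit_eq_gameGradient (ha : 0 < a) (hb : 0 < b) (d : ℝ × ℝ) :
    ∫ c in (0 : ℝ)..1, (price d c - 1) * (winProb (a, b) (price (a, b) c)
        + (price (a, b) c - c) * (if c ≤ 1 / 2 then -a⁻¹ else -b⁻¹))
      = d.1 * (gameGradient (a, b)).1 + d.2 * (gameGradient (a, b)).2 := by
  have hlow : EqOn (fun c => (price d c - 1) * (winProb (a, b) (price (a, b) c)
        + (price (a, b) c - c) * (if c ≤ 1 / 2 then -a⁻¹ else -b⁻¹)))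
      (fun c => (-(d.1 + d.2) / 2 + d.1 * c) * ((3 / 2 + (b / 2 - 1) / a) + (a⁻¹ - 2) * c))
      (Ι 0 (1 / 2)) := by
    intro c hc
    rw [uIoc_of_le (by norm_num)] at hc
    dsimp only
    rw [winProb_price_self ha hb ⟨hc.1.le, by linarith [hc.2]⟩]
    simp only [price, if_pos hc.2]
    field_simp
    ring
  have hhigh : EqOn (fun c => (price d c - 1) * (winProb (a, b) (price (a, b) c)
        + (price (a, b) c - c) * (if c ≤ 1 / 2 then -a⁻¹ else -b⁻¹)))
      (fun c => (-d.2 + d.2 * c) * ((2 - b⁻¹) + (b⁻¹ - 2) * c)) (Ι (1 / 2) 1) := by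
    intro c hc
    rw [uIoc_of_le (by norm_num)] at hc
    dsimp only
    rw [winProb_price_self ha hb ⟨by linarith [hc.1], hc.2⟩]
    simp only [price, if_neg (not_le.mpr hc.1)]
    field_simp
    ring
  rw [← intervalIntegral.integral_add_adjacent_intervals (b := 1 / 2)
      ((by fun_prop : Continuous _).intervalIntegrable _ _ |>.congr hlow.symm)
      ((by fun_prop : Continuous _).intervalIntegrable _ _ |>.congr hhigh.symm),
    intervalIntegral.integral_congr_ae (ae_of_all _ hlow),
    intervalIntegral.integral_congr_ae (ae_of_all _ hhigh),
    integral_linear_mul_linear, integral_linear_mul_linear, gameGradient]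
  field_simp
  ring

theorem hasDerivAt_expUtil_add_smul (ha : 0 < a) (hb : 0 < b) (d : ℝ × ℝ) :
    HasDerivAt (fun t : ℝ => expUtil ((a, b) + t • d) (a, b))
      (d.1 * (gameGradient (a, b)).1 + d.2 * (gameGradient (a, b)).2) 0 := by
  rw [← integral_marginalProfit_eq_gameGradient ha hb d]
  simp only [expUtil, price_add_smul]
  refine hasDerivAt_integral_mul_comp_add_mul (W := winProb (a, b)) (continuous_price _)
    ((continuous_price d).sub continuous_const) (lipschitzWith_winProb ha hb) (abs_winProb_le _)
    (Measurable.ite measurableSet_Iic measurable_const measurable_const) ?_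
  filter_upwards [((countable_singleton 1).insert (1 / 2)).ae_notMem volume] with c hc hcI
  simp only [mem_insert_iff, mem_singleton_iff, not_or] at hc
  rw [uIoc_of_le zero_le_one] at hcI
  exact hasDerivAt_winProb_price ha hb ⟨hcI.1, lt_of_le_of_ne hcI.2 hc.2⟩ hc.1

lemma hasDerivAt_expUtil_fst (ha : 0 < a) (hb : 0 < b) :
    HasDerivAt (fun t => expUtil (t, b) (a, b)) (gameGradient (a, b)).1 a := by
  simpa [Function.comp_def] using (hasDerivAt_expUtil_add_smul ha hb (1, 0)).comp_of_eq a
    ((hasDerivAt_id a).sub_const a) (sub_self a).symm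

lemma hasDerivAt_expUtil_snd (ha : 0 < a) (hb : 0 < b) :
    HasDerivAt (fun t => expUtil (a, t) (a, b)) (gameGradient (a, b)).2 b := by
  simpa [Function.comp_def] using (hasDerivAt_expUtil_add_smul ha hb (0, 1)).comp_of_eq b
    ((hasDerivAt_id b).sub_const b) (sub_self b).symm

end Symmetric

/-- The symmetric game gradient of the two-piece Bertrand duopoly:
`v₁(x) = -7/48 - 3x₂/(48x₁) + 5/(48x₁)` and
`v₂(x) = -1/3 - x₂/(8x₁) + 3/(16x₁) + 1/(24x₂)` for `x₁, x₂ > 0`. -/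
theorem stmt8 (x₁ x₂ : ℝ) (h1 : 0 < x₁) (h2 : 0 < x₂) :
    HasDerivAt (fun t => expUtil (t, x₂) (x₁, x₂))
      (-7 / 48 - 3 * x₂ / (48 * x₁) + 5 / (48 * x₁)) x₁ ∧
    HasDerivAt (fun t => expUtil (x₁, t) (x₁, x₂))
      (-1 / 3 - x₂ / (8 * x₁) + 3 / (16 * x₁) + 1 / (24 * x₂)) x₂ :=
  ⟨hasDerivAt_expUtil_fst h1 h2, hasDerivAt_expUtil_snd h1 h2⟩
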